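/- Let C = k[z,w]/(z²+z³+w²) and let C' = k[t] be a C-module via z ↦ −t²−1, w ↦ −t³−t. A C-linear endomorphism φ of C' factors through a finitely generated free C-module (i.e., is a composite C' → Cⁿ → C' of C-linear maps for some n) if and only if φ(1) lies in the ideal (t²+1)k[t] of k[t]. -/
import Mathlib


set_option synthInstance.maxHeartbeats 1000000
set_option maxHeartbeats 1000000

noncomputable section

/-- The polynomial `z² + z³ + w²` in `k[z,w]`, where `z = X 0` and `w = X 1`. -/
abbrev pC (k : Type*) [Field k] : MvPolynomial (Fin 2) k :=
  MvPolynomial.X 0 ^ 2 + MvPolynomial.X 0 ^ 3 + MvPolynomial.X 1 ^ 2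

/-- `C = k[z,w]/(z²+z³+w²)`, the coordinate ring of a nodal affine cubic. -/
abbrev C (k : Type*) [Field k] : Type _ :=
  MvPolynomial (Fin 2) k ⧸ Ideal.span {pC k}

/-- The `k`-algebra map `k[z,w] → k[t]` with `z ↦ −t²−1`, `w ↦ −t³−t`. -/
def fC (k : Type*) [Field k] : MvPolynomial (Fin 2) k →ₐ[k] Polynomial k :=
  MvPolynomial.aeval ![-(Polynomial.X ^ 2) - 1, -(Polynomial.X ^ 3) - Polynomial.X]

lemma fC_pC (k : Type*) [Field k] : fC k (pC k) = 0 := by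
  simp [fC, pC]
  ring

/-- The induced `k`-algebra map `α : C → k[t]` (normalization of the nodal cubic). -/
def αC (k : Type*) [Field k] : C k →ₐ[k] Polynomial k :=
  Ideal.Quotient.liftₐ (Ideal.span {pC k}) (fC k) (by
    intro a ha
    have h : Ideal.span {pC k} ≤ RingHom.ker (fC k).toRingHom := by
      rw [Ideal.span_le, Set.singleton_subset_iff, SetLike.mem_coe, RingHom.mem_ker]
      exact fC_pC k
    exact RingHom.mem_ker.mp (h ha))

/-- `C' = k[t]` as a `C`-module via `α`. -/
instance algC (k : Type*) [Field k] : Algebra (C k) (Polynomial k) :=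
  (αC k).toRingHom.toAlgebra

/-- The `C`-linear map `C² → C' = k[t]`, `(a,b) ↦ α(a) − α(b)·t`. -/
def gC (k : Type*) [Field k] : (C k × C k) →ₗ[C k] Polynomial k :=
  (Algebra.linearMap (C k) (Polynomial k)).comp (LinearMap.fst _ _ _) -
    (LinearMap.mulRight (C k) (Polynomial.X : Polynomial k)).comp
      ((Algebra.linearMap (C k) (Polynomial k)).comp (LinearMap.snd _ _ _))

open Polynomial in
def ι (k : Type*) [Field k] : Polynomial k →ₐ[k] MvPolynomial (Fin 2) k :=
  Polynomial.aeval (MvPolynomial.X 0)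

open Polynomial in
lemma exists_div (k : Type*) [Field k] (p : MvPolynomial (Fin 2) k) :
    ∃ (q : MvPolynomial (Fin 2) k) (r0 r1 : Polynomial k),
      p = q * pC k + ι k r0 + ι k r1 * MvPolynomial.X 1 := by
  induction p using MvPolynomial.induction_on with
  | C a => exact ⟨0, Polynomial.C a, 0, by simp [ι]⟩
  | add p q hp hq =>
      obtain ⟨qp, r0p, r1p, hp⟩ := hp
      obtain ⟨qq, r0q, r1q, hq⟩ := hq
      exact ⟨qp + qq, r0p + r0q, r1p + r1q, by rw [hp, hq, map_add, map_add]; ring⟩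
  | mul_X p i hp =>
      obtain ⟨q, r0, r1, hp⟩ := hp
      fin_cases i
      · refine ⟨q * MvPolynomial.X 0, r0 * X, r1 * X, ?_⟩
        rw [hp, map_mul, map_mul]
        simp only [ι, Polynomial.aeval_X, Fin.zero_eta, Fin.mk_one]
        ring
      · refine ⟨q * MvPolynomial.X 1 + ι k r1, r1 * (-(X^2) - X^3), r0, ?_⟩
        rw [hp, map_mul]
        simp only [ι, map_neg, map_add, map_sub, map_mul, map_pow, Polynomial.aeval_X,
          Fin.zero_eta, Fin.mk_one]
        ring

open Polynomial in
lemma aeval_u_eq_zero (k : Type*) [Field k] [CharZero k] (r : Polynomial k)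
    (h : Polynomial.aeval (-(X^2) - 1 : Polynomial k) r = 0) : r = 0 := by
  rw [← comp_eq_aeval] at h
  rcases comp_eq_zero_iff.mp h with h | ⟨_, h⟩
  · exact h
  · exfalso
    have h2 := congrArg (fun p => Polynomial.coeff p 2) h
    simp at h2

open Polynomial in
lemma parity (k : Type*) [Field k] [CharZero k] (r0 r1 : Polynomial k)
    (h : Polynomial.aeval (-(X^2) - 1 : Polynomial k) r0
        + Polynomial.aeval (-(X^2) - 1 : Polynomial k) r1 * (-(X^3) - X) = 0) :
    r0 = 0 ∧ r1 = 0 := by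
  set u : Polynomial k := -(X^2) - 1 with hu
  have hσ := congrArg (Polynomial.aeval (-X : Polynomial k)) h
  rw [map_add, map_mul, map_zero] at hσ
  rw [← Polynomial.aeval_algHom_apply (Polynomial.aeval (-X : Polynomial k)) u r0,
      ← Polynomial.aeval_algHom_apply (Polynomial.aeval (-X : Polynomial k)) u r1] at hσ
  have huu : Polynomial.aeval (-X : Polynomial k) u = u := by
    simp [hu]
  have hodd : Polynomial.aeval (-X : Polynomial k) (-(X^3) - X : Polynomial k)
      = X^3 + X := by
    simp; ring
  rw [huu, hodd] at hσ
  have h1 : Polynomial.aeval u r1 * (2*X^3 + 2*X) = 0 := by linear_combination hσ - h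
  have h2 : (2*X^3 + 2*X : Polynomial k) ≠ 0 := by
    intro hz
    have := congrArg (fun p => Polynomial.coeff p 1) hz
    simp at this
  have hr1 : r1 = 0 := aeval_u_eq_zero k r1 ((mul_eq_zero.mp h1).resolve_right h2)
  refine ⟨aeval_u_eq_zero k r0 ?_, hr1⟩
  rw [hr1, map_zero, zero_mul, add_zero] at h
  exact h

namespace Hlp
variable (k : Type*) [Field k]
open Polynomial

lemma αC_mk (p : MvPolynomial (Fin 2) k) :
    αC k (Ideal.Quotient.mk (Ideal.span {pC k}) p) = fC k p := rfl

def zC : C k := Ideal.Quotient.mk (Ideal.span {pC k}) (MvPolynomial.X 0)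
def wC : C k := Ideal.Quotient.mk (Ideal.span {pC k}) (MvPolynomial.X 1)

lemma αC_z : αC k (zC k) = -(X^2) - 1 := by simp [zC, αC_mk, fC]
lemma αC_w : αC k (wC k) = -(X^3) - X := by simp [wC, αC_mk, fC]

lemma smul_def' (c : C k) (f : Polynomial k) : c • f = αC k c * f := rfl

variable [CharZero k]

lemma αC_inj : Function.Injective (αC k) := by
  rw [injective_iff_map_eq_zero]
  intro x hx
  obtain ⟨p, rfl⟩ := Ideal.Quotient.mk_surjective x
  rw [αC_mk] at hx
  obtain ⟨q, r0, r1, hp⟩ := exists_div k p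
  rw [hp, map_add, map_add, map_mul, map_mul] at hx
  have hpC : fC k (pC k) = 0 := by simp [fC, pC]; ring
  have hι : ∀ r : Polynomial k, fC k (ι k r) = Polynomial.aeval (-(X^2) - 1 : Polynomial k) r := by
    intro r
    rw [ι, ← Polynomial.aeval_algHom_apply (fC k) (MvPolynomial.X 0) r]
    congr 1
    simp [fC]
  rw [hpC, mul_zero, zero_add, hι, hι] at hx
  have hX1 : fC k (MvPolynomial.X 1) = -(X^3) - X := by simp [fC]
  rw [hX1] at hx
  obtain ⟨h0, h1⟩ := parity k r0 r1 hx
  rw [hp, h0, h1]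
  simp only [map_zero, zero_mul, add_zero, mul_zero]
  rw [Ideal.Quotient.eq_zero_iff_mem]
  exact Ideal.mul_mem_left _ _ (Ideal.subset_span rfl)

end Hlp

namespace Hlp
variable (k : Type*) [Field k]
open Polynomial

lemma fC_image (p : MvPolynomial (Fin 2) k) :
    ∃ (a : k) (u : Polynomial k), fC k p = Polynomial.C a + (X^2 + 1) * u := by
  induction p using MvPolynomial.induction_on with
  | C a => exact ⟨a, 0, by simp [fC]⟩
  | add p q hp hq =>
      obtain ⟨a, u, hp⟩ := hp
      obtain ⟨b, v, hq⟩ := hq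
      exact ⟨a + b, u + v, by rw [map_add, hp, hq, map_add]; ring⟩
  | mul_X p i hp =>
      obtain ⟨a, u, hp⟩ := hp
      fin_cases i
      · refine ⟨0, -(Polynomial.C a + (X^2+1) * u), ?_⟩
        rw [map_mul, hp]
        have : fC k (MvPolynomial.X (⟨0, by omega⟩ : Fin 2)) = -(X^2) - 1 := by simp [fC]
        rw [this, map_zero]
        ring
      · refine ⟨0, -X * (Polynomial.C a + (X^2+1) * u), ?_⟩
        rw [map_mul, hp]
        have : fC k (MvPolynomial.X (⟨1, by omega⟩ : Fin 2)) = -(X^3) - X := by simp [fC]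
        rw [this, map_zero]
        ring

lemma αC_image (c : C k) :
    ∃ (a : k) (u : Polynomial k), αC k c = Polynomial.C a + (X^2 + 1) * u := by
  obtain ⟨p, rfl⟩ := Ideal.Quotient.mk_surjective c
  rw [αC_mk]
  exact fC_image k p

lemma decomp (f : Polynomial k) :
    ∃ (c c' : C k), f = αC k c + αC k c' * X := by
  induction f using Polynomial.induction_on with
  | C a => exact ⟨algebraMap k (C k) a, 0, by simp [AlgHom.commutes]⟩
  | add p q hp hq =>
      obtain ⟨c, c', hp⟩ := hp
      obtain ⟨d, d', hq⟩ := hq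
      exact ⟨c + d, c' + d', by rw [hp, hq, map_add, map_add]; ring⟩
  | monomial n a hp =>
      obtain ⟨c, c', hp⟩ := hp
      refine ⟨c' * (-(zC k) - 1), c, ?_⟩
      have h2 : Polynomial.C a * X^(n+1) = (Polynomial.C a * X^n) * X := by ring
      rw [h2, hp, map_mul, map_sub, map_neg, αC_z, map_one]
      ring

lemma phi_mul [CharZero k] (φ : Polynomial k →ₗ[C k] Polynomial k) (f : Polynomial k) :
    φ f = φ 1 * f := by
  have hX21 : (X^2 + 1 : Polynomial k) ≠ 0 := by
    intro hz
    have := congrArg (fun p => Polynomial.coeff p 0) hz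
    simp at this
  have hrel : (wC k) • (1 : Polynomial k) = (zC k) • X := by
    rw [smul_def', smul_def', αC_z, αC_w]; ring
  have hX : φ X = X * φ 1 := by
    have h1 := congrArg φ hrel
    rw [map_smul, map_smul, smul_def', smul_def', αC_z, αC_w] at h1
    have h2 : (X^2 + 1 : Polynomial k) * (X * φ 1 - φ X) = 0 := by linear_combination -h1
    have h3 := (mul_eq_zero.mp h2).resolve_left hX21
    linear_combination -h3
  obtain ⟨c, c', hf⟩ := decomp k f
  have : φ f = φ (c • (1 : Polynomial k) + c' • X) := by
    rw [smul_def', smul_def', mul_one]; exact congrArg φ hf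
  rw [this, map_add, map_smul, map_smul, smul_def', smul_def', hX, hf]
  ring

end Hlp

namespace Hlp
variable (k : Type*) [Field k]
open Polynomial

lemma smulC (c d : C k) : c • d = c * d := rfl

lemma gamma_mem [IsAlgClosed k] [CharZero k] (γ : Polynomial k →ₗ[C k] C k) :
    αC k (γ 1) ∈ Ideal.span {(X : Polynomial k)^2 + 1} := by
  have hX21 : (X^2 + 1 : Polynomial k) ≠ 0 := by
    intro hz
    have := congrArg (fun p => Polynomial.coeff p 0) hz
    simp at this
  have hrel : (wC k) • (1 : Polynomial k) = (zC k) • X := by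
    rw [smul_def', smul_def', αC_z, αC_w]; ring
  have h1 := congrArg γ hrel
  rw [map_smul, map_smul, smulC, smulC] at h1
  have h2 := congrArg (αC k) h1
  rw [map_mul, map_mul, αC_z, αC_w] at h2
  have h3 : (X^2+1 : Polynomial k) * (X * αC k (γ 1) - αC k (γ X)) = 0 := by
    linear_combination -h2
  have h4 : αC k (γ X) = X * αC k (γ 1) := by
    have := (mul_eq_zero.mp h3).resolve_left hX21
    linear_combination -this
  obtain ⟨a, u, hc⟩ := αC_image k (γ 1)
  obtain ⟨b, v, hd⟩ := αC_image k (γ X)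
  obtain ⟨i, hi⟩ := IsAlgClosed.exists_pow_nat_eq (-1 : k) (zero_lt_two)
  have heq : Polynomial.C b + (X^2+1) * v = X * (Polynomial.C a + (X^2+1) * u) := by
    rw [← hc, ← hd, h4]
  have hevi := congrArg (Polynomial.eval i) heq
  have hevni := congrArg (Polynomial.eval (-i)) heq
  simp only [Polynomial.eval_add, Polynomial.eval_mul, Polynomial.eval_pow,
    Polynomial.eval_X, Polynomial.eval_one, Polynomial.eval_C] at hevi hevni
  rw [hi] at hevi
  have hni : (-i)^2 = -1 := by rw [neg_pow]; simp [hi]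
  rw [hni] at hevni
  simp only [neg_add_cancel, zero_mul, add_zero, mul_comm] at hevi hevni
  -- hevi : b = i * a (roughly), hevni : b = -i * a
  have hia : i ≠ 0 := by
    intro h0
    rw [h0] at hi
    simp at hi
  have ha : a = 0 := by
    have h5 : (2 : k) * (i * a) = 0 := by linear_combination hevni - hevi
    have h6 := (mul_eq_zero.mp h5).resolve_left two_ne_zero
    exact (mul_eq_zero.mp h6).resolve_left hia
  rw [Ideal.mem_span_singleton]
  exact ⟨u, by rw [hc, ha]; simp⟩

def eSec : ℕ → C k := fun n =>
  (-(zC k) - 1)^(n/2) * (if n % 2 = 0 then -(zC k) else -(wC k))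

lemma αC_eSec (n : ℕ) : αC k (eSec k n) = (X^2 + 1) * X^n := by
  rw [eSec, map_mul, map_pow, map_sub, map_neg, αC_z, map_one]
  have hbase : (-(-(X^2 : Polynomial k) - 1) - 1) = X^2 := by ring
  rw [hbase]
  rcases Nat.even_or_odd n with he | ho
  · have h2 : n % 2 = 0 := Nat.even_iff.mp he
    rw [h2, if_pos rfl, map_neg, αC_z]
    have : (X^2 : Polynomial k)^(n/2) = X^n := by
      rw [← pow_mul]
      congr 1
      omega
    rw [this]; ring
  · have h2 : n % 2 = 1 := Nat.odd_iff.mp ho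
    rw [h2, if_neg one_ne_zero, map_neg, αC_w]
    have : (X^2 : Polynomial k)^(n/2) * X = X^n := by
      rw [← pow_mul, ← pow_succ]
      congr 1
      omega
    rw [← this]; ring

def sSec : Polynomial k → C k := fun f =>
  f.sum (fun n a => algebraMap k (C k) a * eSec k n)

lemma αC_sSec (f : Polynomial k) : αC k (sSec k f) = (X^2 + 1) * f := by
  rw [sSec, Polynomial.sum_def, map_sum]
  have : ∀ n ∈ f.support, αC k (algebraMap k (C k) (f.coeff n) * eSec k n)
      = (X^2 + 1) * (Polynomial.C (f.coeff n) * X^n) := by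
    intro n _
    rw [map_mul, αC_eSec, AlgHom.commutes]
    have : algebraMap k (Polynomial k) (f.coeff n) = Polynomial.C (f.coeff n) := rfl
    rw [this]; ring
  rw [Finset.sum_congr rfl this, ← Finset.mul_sum]
  congr 1
  conv_rhs => rw [← Polynomial.sum_C_mul_X_pow_eq f]
  rw [Polynomial.sum_def]

end Hlp


/-- A `C`-linear endomorphism `φ` of `C' = k[t]` factors through a finitely generated free
`C`-module if and only if `φ(1)` lies in the ideal `(t²+1)·k[t]`. -/
theorem stmt10 (k : Type*) [Field k] [IsAlgClosed k] [CharZero k]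
    (φ : Polynomial k →ₗ[C k] Polynomial k) :
    (∃ (n : ℕ) (g : Polynomial k →ₗ[C k] (Fin n → C k))
        (h : (Fin n → C k) →ₗ[C k] Polynomial k), φ = h.comp g) ↔
      φ 1 ∈ Ideal.span {(Polynomial.X : Polynomial k) ^ 2 + 1} := by
  constructor
  · rintro ⟨n, g, h, rfl⟩
    simp only [LinearMap.comp_apply]
    rw [LinearMap.pi_apply_eq_sum_univ h (g 1)]
    apply Ideal.sum_mem
    intro i _
    rw [Hlp.smul_def']
    have hg : g 1 i = ((LinearMap.proj i).comp g) (1 : Polynomial k) := rfl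
    rw [hg]
    exact Ideal.mul_mem_right _ _ (Hlp.gamma_mem k _)
  · intro hmem
    rw [Ideal.mem_span_singleton] at hmem
    obtain ⟨q, hq⟩ := hmem
    refine ⟨1, ⟨⟨fun f _ => Hlp.sSec k (q * f), ?_⟩, ?_⟩,
      ⟨⟨fun v => αC k (v 0), ?_⟩, ?_⟩, ?_⟩
    · intro f f'
      funext j
      apply Hlp.αC_inj k
      rw [Pi.add_apply, map_add, Hlp.αC_sSec, Hlp.αC_sSec, Hlp.αC_sSec]
      ring
    · intro c f
      funext j
      apply Hlp.αC_inj k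
      rw [RingHom.id_apply, Pi.smul_apply, Hlp.smulC, map_mul, Hlp.αC_sSec,
        Hlp.αC_sSec, Hlp.smul_def']
      ring
    · intro v w
      show αC k ((v + w) 0) = αC k (v 0) + αC k (w 0)
      rw [Pi.add_apply, map_add]
    · intro c v
      show αC k ((c • v) 0) = c • αC k (v 0)
      rw [Pi.smul_apply, Hlp.smulC, map_mul, Hlp.smul_def']
    · apply LinearMap.ext
      intro f
      simp only [LinearMap.comp_apply, LinearMap.coe_mk, AddHom.coe_mk]
      rw [Hlp.αC_sSec, Hlp.phi_mul k φ f, hq]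
      ring

end
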